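/- arXiv:2011.10128 — 2 statements merged into one kernel-verified Lean document; each statement's English description precedes it below -/
import Mathlib

section
/- For 1 ≤ i < j ≤ m and i ≤ k < j, the action of the permutation s_{j-1} s_{j-2} ⋯ s_i (via the birational R-matrix S_m action) on x_k^{(r)} is given by s_{j-1}⋯s_i(x_k^{(r)}) = x_{k+1}^{(r+1)} σ_{(n-1)(k+1-i)}^{(r-k+i)}(x_i,...,x_{k+1}) σ_{(n-1)(k-i)}^{(r-k+i-1)}(x_i,...,x_k) / [σ_{(n-1)(k+1-i)}^{(r-k+i-1)}(x_i,...,x_{k+1}) σ_{(n-1)(k-i)}^{(r-k+i)}(x_i,...,x_k)], with upper indices mod n. -/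
open Finset

noncomputable section BirationalR

/-- A vector of reals with cyclically indexed coordinates (upper index mod `n`). -/
abbrev Vec (n : ℕ) := ZMod n → ℝ

/-- `κ_r(a,b) = Σ_{j=r}^{r+n-1} (Π_{k=r+1}^{j} b_k)(Π_{k=j+1}^{r+n-1} a_k)`, indices mod `n`. -/
def kappaF (n : ℕ) (r : ZMod n) (a b : Vec n) : ℝ :=
  ∑ d ∈ Finset.range n,
    (∏ t ∈ Finset.range d, b (r + 1 + (t : ℕ))) *
      ∏ t ∈ Finset.range (n - 1 - d), a (r + 1 + (d : ℕ) + (t : ℕ))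

/-- First component `b'` of the birational R-matrix `η(a,b) = (b',a')`:
`b'_i = b_{i+1} κ_{i+1}(a,b)/κ_i(a,b)`. -/
def etaB (n : ℕ) (a b : Vec n) : Vec n :=
  fun i => b (i + 1) * kappaF n (i + 1) a b / kappaF n i a b

/-- Second component `a'` of `η(a,b) = (b',a')`: `a'_i = a_{i-1} κ_{i-1}(a,b)/κ_i(a,b)`. -/
def etaA (n : ℕ) (a b : Vec n) : Vec n :=
  fun i => a (i - 1) * kappaF n (i - 1) a b / kappaF n i a b

/-- `η` applied to positions `(p, p+1)` of a tuple of vectors. -/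
def etaAt (n : ℕ) (p : ℕ) (X : ℕ → Vec n) : ℕ → Vec n :=
  fun q => if q = p then etaB n (X p) (X (p + 1))
    else if q = p + 1 then etaA n (X p) (X (p + 1)) else X q

/-- Action of the word `s_{w₁} s_{w₂} ⋯ s_{wₗ}` (rightmost acts first). -/
def applyWord (n : ℕ) (w : List ℕ) (X : ℕ → Vec n) : ℕ → Vec n :=
  w.foldr (etaAt n) X

/-- The tuple `(x_i, x_{i+1}, …, x_j)` as a list. -/
def seg {n : ℕ} (x : ℕ → Vec n) (i j : ℕ) : List (Vec n) :=
  (List.range (j + 1 - i)).map fun t => x (i + t)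

/-- `τ_k^{(r)}(x_1,…,x_m)`: sum over weakly increasing `i_1 ≤ … ≤ i_k`, no index used
more than `n-1` times, of `x_{i_1}^{(r)} x_{i_2}^{(r-1)} ⋯ x_{i_k}^{(r-k+1)}`.
Encoded via multiplicity functions; `τ = 0` for negative `k`. -/
def tauF (n : ℕ) (r : ZMod n) (k : ℤ) (x : List (Vec n)) : ℝ :=
  if 0 ≤ k then
    ∑ c ∈ (Fintype.piFinset fun _ : Fin x.length => Finset.range n).filter
        (fun c => ∑ i, c i = k.toNat),
      ∏ i : Fin x.length, ∏ β ∈ Finset.range (c i),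
        x.get i (r - (∑ i' ∈ Finset.univ.filter (fun i' => i' < i), c i' : ℕ) - (β : ℕ))
  else 0

/-- `σ_k^{(r)}(x_1,…,x_m) = Σ_{t=0}^{k} x_1^{(r)} ⋯ x_1^{(r-t+1)} τ_{k-t}^{(r-t)}(x_2,…,x_m)`. -/
def sigmaF (n : ℕ) (r : ZMod n) (k : ℕ) : List (Vec n) → ℝ
  | [] => if k = 0 then 1 else 0
  | y :: rest =>
      ∑ t ∈ Finset.range (k + 1),
        (∏ β ∈ Finset.range t, y (r - (β : ℕ))) * tauF n (r - (t : ℕ)) ((k : ℤ) - (t : ℤ)) rest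

/-- `σ̄_k^{(r)}(x_1,…,x_m) = Σ_{t=0}^{k} τ_{k-t}^{(r)}(x_1,…,x_{m-1}) x_m^{(r-k+t)} ⋯ x_m^{(r-k+1)}`. -/
def sigmaBarF (n : ℕ) (r : ZMod n) (k : ℕ) : List (Vec n) → ℝ
  | [] => if k = 0 then 1 else 0
  | y :: rest =>
      ∑ t ∈ Finset.range (k + 1),
        tauF n r ((k : ℤ) - (t : ℤ)) ((y :: rest).dropLast) *
          ∏ β ∈ Finset.range t,
            (y :: rest).getLast (List.cons_ne_nil y rest) (r - (k : ℕ) + 1 + (β : ℕ))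

/-- `Ω_k^{(r)}(x_i,…,x_j) = Σ_{ℓ=0}^{n-1} σ^{(r)}_{(n-1)(k-i)+ℓ}(x_i,…,x_k)
σ̄^{(r+k-i-ℓ)}_{(n-1)(j-k)-ℓ}(x_{k+1},…,x_j)`. -/
def OmegaF (n : ℕ) (r : ZMod n) (k i j : ℕ) (x : ℕ → Vec n) : ℝ :=
  ∑ ℓ ∈ Finset.range n,
    sigmaF n r ((n - 1) * (k - i) + ℓ) (seg x i k) *
      sigmaBarF n (r + (k : ℕ) - (i : ℕ) - (ℓ : ℕ)) ((n - 1) * (j - k) - ℓ) (seg x (k + 1) j)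

/-- `P_k^{(r)}(x_i,…,x_j) = Σ_{t=0}^{k} (Π_{s=0}^{t-1} x_i^{(r-s)})
σ_{(n-1)(j-i-1)}^{(r-t)}(x_i,…,x_{j-1}) (Π_{s=0}^{k-t-1} x_j^{(r-t+j-i-1-s)})`. -/
def PF (n : ℕ) (r : ZMod n) (k i j : ℕ) (x : ℕ → Vec n) : ℝ :=
  ∑ t ∈ Finset.range (k + 1),
    (∏ s ∈ Finset.range t, x i (r - (s : ℕ))) *
      sigmaF n (r - (t : ℕ)) ((n - 1) * (j - i - 1)) (seg x i (j - 1)) *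
      ∏ s ∈ Finset.range (k - t), x j (r - (t : ℕ) + (j : ℕ) - (i : ℕ) - 1 - (s : ℕ))

end BirationalR

/-!
Applying `s_i`, then `s_{i+1}`, …, `s_{j-1}` carries `x_i` to the right: at position `p` the
carried vector `z` and `x_{p+1}` are replaced by `η_B(z, x_{p+1})`, which stays, and
`η_A(z, x_{p+1})`, which moves on. Hence the `k`-th entry is `η_B(z_{k-i}, x_{k+1})`, i.e.
`x_{k+1}^{(r+1)} κ_{r+1} / κ_r`. By induction on `q`,
`z_q^{(r)} = x_i^{(r-q)} σ^{(r-q-1)}_{(n-1)q}(x_i,…,x_{i+q}) / σ^{(r-q)}_{(n-1)q}(x_i,…,x_{i+q})`: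
this is `x_i` twisted by a ratio of consecutive values of a function of `r`, so the products in
`κ_r(z_q, x_{i+q+1})` telescope, and what is left is the expansion of
`σ^{(r-q-1)}_{(n-1)(q+1)}(x_i,…,x_{i+q+1})` according to the multiplicity `d` of `x_{i+q+1}`
(which forces `x_i` to occur `n-1-d` more times than in a term of degree `(n-1)q`).
-/

noncomputable section

variable {n : ℕ}

lemma natCast_eq_neg_of_add_eq {a b : ℕ} (h : a + b = n) : (a : ZMod n) = -b := by
  rw [eq_neg_iff_add_eq_zero, ← Nat.cast_add, h, ZMod.natCast_self]

lemma List.get_append_singleton {α : Type*} (u : List α) (w : α) :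
    (u ++ [w]).get = Fin.snoc (α := fun _ => α) u.get w ∘ Fin.cast (by simp) := by
  funext i
  rcases i with ⟨i, hi⟩
  simp only [List.length_append, List.length_singleton] at hi
  rcases Nat.lt_succ_iff_lt_or_eq.1 hi with hi | rfl
  · simp [Fin.snoc, hi, List.getElem_append_left]
  · simp [Fin.snoc]

section TauFin

variable {L : ℕ}

def boundedComps (n L K : ℕ) : Finset (Fin L → ℕ) :=
  (Fintype.piFinset fun _ : Fin L => range n).filter fun c => ∑ i, c i = K

lemma mem_boundedComps {K : ℕ} {c : Fin L → ℕ} :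
    c ∈ boundedComps n L K ↔ (∀ i, c i < n) ∧ ∑ i, c i = K := by
  simp [boundedComps]

lemma sum_boundedComps_succ {M : Type*} [AddCommMonoid M] (K : ℕ)
    (f : (Fin (L + 1) → ℕ) → M) :
    ∑ c ∈ boundedComps n (L + 1) K, f c =
      ∑ d ∈ (range n).filter (· ≤ K), ∑ c ∈ boundedComps n L (K - d), f (Fin.snoc c d) := by
  have hlast : ∀ c ∈ boundedComps n (L + 1) K, c (Fin.last L) ∈ (range n).filter (· ≤ K) := by
    intro c hc
    rw [mem_boundedComps] at hc
    rw [mem_filter, mem_range, ← hc.2]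
    exact ⟨hc.1 _, single_le_sum (fun _ _ => Nat.zero_le _) (mem_univ _)⟩
  rw [← sum_fiberwise_of_maps_to hlast]
  refine sum_congr rfl fun d hd => ?_
  rw [mem_filter, mem_range] at hd
  refine sum_nbij' Fin.init (fun c => Fin.snoc c d) ?_ ?_ ?_ ?_ ?_
  · intro c hc
    simp only [mem_filter, mem_boundedComps, Fin.sum_univ_castSucc] at hc ⊢
    refine ⟨fun i => hc.1.1 _, ?_⟩
    simp only [Fin.init]
    omega
  · intro c hc
    simp only [mem_filter, mem_boundedComps, Fin.sum_univ_castSucc, Fin.snoc_castSucc,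
      Fin.snoc_last, and_true] at hc ⊢
    exact ⟨fun i => Fin.lastCases (by simpa using hd.1) (fun j => by simpa using hc.1 j) i,
      by omega⟩
  · intro c hc
    simp only [mem_filter] at hc
    rw [← hc.2, Fin.snoc_init_self]
  · intro c _
    exact Fin.init_snoc _ _
  · intro c hc
    simp only [mem_filter] at hc
    rw [← hc.2, Fin.snoc_init_self]

-- `tauF` reindexed by `Fin`, so that the last vector can be split off with `Fin.snoc`.
def tauWeight (r : ZMod n) (v : Fin L → Vec n) (c : Fin L → ℕ) : ℝ :=
  ∏ i : Fin L, ∏ β ∈ range (c i),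
    v i (r - (∑ i' ∈ univ.filter (fun i' => i' < i), c i' : ℕ) - (β : ℕ))

def tauFin (r : ZMod n) (k : ℤ) (v : Fin L → Vec n) : ℝ :=
  if 0 ≤ k then ∑ c ∈ boundedComps n L k.toNat, tauWeight r v c else 0

lemma tauF_eq_tauFin (r : ZMod n) (k : ℤ) (x : List (Vec n)) :
    tauF n r k x = tauFin r k x.get := rfl

lemma tauWeight_snoc (r : ZMod n) (v : Fin L → Vec n) (w : Vec n) (c : Fin L → ℕ) (d : ℕ) :
    tauWeight r (Fin.snoc v w : Fin (L + 1) → Vec n) (Fin.snoc c d) =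
      tauWeight r v c * ∏ β ∈ range d, w (r - (∑ i, c i : ℕ) - (β : ℕ)) := by
  simp only [tauWeight, Fin.prod_univ_castSucc, Fin.snoc_castSucc, Fin.snoc_last,
    filter_gt_eq_Iio, Fin.sum_Iio_castSucc, Fin.Iio_last_eq_map, sum_map, Fin.coe_castSuccEmb]

lemma tauFin_of_neg {k : ℤ} (hk : k < 0) (r : ZMod n) (v : Fin L → Vec n) :
    tauFin r k v = 0 :=
  if_neg (not_le.2 hk)

lemma tauFin_snoc (r : ZMod n) (k : ℤ) (v : Fin L → Vec n) (w : Vec n) :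
    tauFin r k (Fin.snoc v w : Fin (L + 1) → Vec n) =
      ∑ d ∈ range n, (∏ t ∈ range d, w (r - k + 1 + (t : ℕ))) * tauFin r (k - d) v := by
  rcases lt_or_ge k 0 with hk | hk
  · rw [tauFin_of_neg hk]
    exact (sum_eq_zero fun d _ => by rw [tauFin_of_neg (by omega), mul_zero]).symm
  lift k to ℕ using hk
  rw [← sum_filter_add_sum_filter_not (range n) (· ≤ k),
    sum_eq_zero (s := (range n).filter (¬ · ≤ k)) fun d hd => ?_, add_zero, tauFin,
    if_pos (Int.natCast_nonneg k), Int.toNat_natCast, sum_boundedComps_succ]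
  · refine sum_congr rfl fun d hd => ?_
    rw [mem_filter] at hd
    rw [tauFin, if_pos (by omega), mul_sum, show ((k : ℤ) - d).toNat = k - d by omega]
    refine sum_congr rfl fun c hc => ?_
    rw [tauWeight_snoc, mul_comm, (mem_boundedComps.1 hc).2, ← prod_range_reflect]
    congr 1
    refine prod_congr rfl fun t ht => congrArg w ?_
    rw [mem_range] at ht
    rw [Nat.sub_sub]
    push_cast [Nat.cast_sub hd.2, Nat.cast_sub (show 1 + t ≤ d by omega)]
    ring
  · rw [mem_filter] at hd
    rw [tauFin_of_neg (by omega), mul_zero]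

end TauFin

lemma tauFin_comp_cast {L L' : ℕ} (h : L' = L) (r : ZMod n) (k : ℤ) (v : Fin L → Vec n) :
    tauFin r k (v ∘ Fin.cast h) = tauFin r k v := by
  subst h
  rfl

lemma tauF_append_singleton (r : ZMod n) (k : ℤ) (u : List (Vec n)) (w : Vec n) :
    tauF n r k (u ++ [w]) =
      ∑ d ∈ range n, (∏ t ∈ range d, w (r - k + 1 + (t : ℕ))) * tauF n r (k - d) u := by
  rw [tauF_eq_tauFin, List.get_append_singleton, tauFin_comp_cast, tauFin_snoc]
  rfl

lemma tauF_of_neg {k : ℤ} (hk : k < 0) (r : ZMod n) (x : List (Vec n)) : tauF n r k x = 0 :=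
  tauFin_of_neg hk r x.get

lemma tauF_zero (hn : 0 < n) (r : ZMod n) (x : List (Vec n)) : tauF n r 0 x = 1 := by
  have hcomps : boundedComps n x.length 0 = {0} := by
    ext c
    simp only [mem_boundedComps, sum_eq_zero_iff, mem_univ, true_implies, mem_singleton,
      funext_iff, Pi.zero_apply]
    exact ⟨fun h => h.2, fun h => ⟨fun i => h i ▸ hn, h⟩⟩
  simp [tauF_eq_tauFin, tauFin, hcomps, tauWeight]

lemma tauF_nonneg (r : ZMod n) (k : ℤ) {x : List (Vec n)} (hx : ∀ v ∈ x, ∀ s, 0 < v s) :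
    0 ≤ tauF n r k x := by
  rw [tauF_eq_tauFin, tauFin]
  split_ifs
  · exact sum_nonneg fun c _ => prod_nonneg fun i _ =>
      prod_nonneg fun β _ => (hx _ (x.get_mem i) _).le
  · exact le_rfl

lemma tauF_eq_zero_of_lt (r : ZMod n) {k : ℤ} (x : List (Vec n))
    (hk : (((n - 1) * x.length : ℕ) : ℤ) < k) : tauF n r k x = 0 := by
  rw [tauF_eq_tauFin, tauFin, if_pos (by omega)]
  refine sum_eq_zero fun c hc => absurd ?_ hk.not_ge
  rw [mem_boundedComps] at hc
  have : ∑ i, c i ≤ ∑ _i : Fin x.length, (n - 1) :=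
    sum_le_sum fun i _ => Nat.le_sub_one_of_lt (hc.1 i)
  simp only [sum_const, card_univ, Fintype.card_fin, smul_eq_mul, hc.2] at this
  rw [mul_comm]
  omega

lemma sigmaF_pos (hn : 0 < n) (r : ZMod n) (K : ℕ) {y : Vec n} {rest : List (Vec n)}
    (hy : ∀ s, 0 < y s) (hrest : ∀ v ∈ rest, ∀ s, 0 < v s) : 0 < sigmaF n r K (y :: rest) := by
  refine sum_pos' (fun t _ => mul_nonneg (prod_nonneg fun β _ => (hy _).le)
    (tauF_nonneg _ _ hrest)) ⟨K, self_mem_range_succ K, ?_⟩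
  rw [sub_self, tauF_zero hn, mul_one]
  exact prod_pos fun β _ => hy _

lemma sigmaF_zero (hn : 0 < n) (r : ZMod n) (y : Vec n) (rest : List (Vec n)) :
    sigmaF n r 0 (y :: rest) = 1 := by
  simp [sigmaF, tauF_zero hn]

lemma sigmaF_cons_append_singleton (ρ : ZMod n) (A : ℕ) (x₀ w : Vec n) (u : List (Vec n)) :
    sigmaF n ρ A (x₀ :: (u ++ [w])) =
      ∑ d ∈ range n, (∏ t ∈ range d, w (ρ - (A : ℕ) + 1 + (t : ℕ))) *
        ∑ t ∈ range (A + 1), (∏ β ∈ range t, x₀ (ρ - (β : ℕ))) *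
          tauF n (ρ - (t : ℕ)) ((A : ℤ) - t - d) u := by
  simp only [sigmaF, tauF_append_singleton, mul_sum]
  rw [sum_comm]
  refine sum_congr rfl fun d _ => sum_congr rfl fun t _ => ?_
  rw [mul_left_comm]
  congr 2
  funext s
  congr 1
  push_cast
  ring

lemma sum_prod_mul_tauF_eq_mul_sigmaF (ρ : ZMod n) (x₀ : Vec n) (u : List (Vec n))
    {A c : ℕ} (hA : c + (n - 1) * u.length ≤ A) :
    ∑ t ∈ range (A + 1), (∏ β ∈ range t, x₀ (ρ - (β : ℕ))) *
        tauF n (ρ - (t : ℕ)) (((c + (n - 1) * u.length : ℕ) : ℤ) - t) u =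
      (∏ β ∈ range c, x₀ (ρ - (β : ℕ))) *
        sigmaF n (ρ - (c : ℕ)) ((n - 1) * u.length) (x₀ :: u) := by
  set B := (n - 1) * u.length
  have hsupp : ∀ t ∈ range (A + 1), t ∉ Ico c (c + B + 1) →
      (∏ β ∈ range t, x₀ (ρ - (β : ℕ))) * tauF n (ρ - (t : ℕ)) (((c + B : ℕ) : ℤ) - t) u = 0 := by
    intro t _ ht
    rw [mem_Ico, not_and_or, not_le, not_lt] at ht
    rcases ht with ht | ht
    · rw [tauF_eq_zero_of_lt _ _ (by omega), mul_zero]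
    · rw [tauF_of_neg (by omega), mul_zero]
  rw [← sum_subset (fun t ht => by rw [mem_Ico] at ht; rw [mem_range]; omega) hsupp,
    sum_Ico_eq_sum_range, sigmaF, mul_sum, show c + B + 1 - c = B + 1 by omega]
  refine sum_congr rfl fun s _ => ?_
  rw [prod_range_add, mul_assoc]
  congr 2
  · refine prod_congr rfl fun β _ => congrArg x₀ ?_
    push_cast
    ring
  · congr 1 <;> push_cast <;> ring

lemma sigmaF_cons_append_singleton_eq_sum_sigmaF (hn : 0 < n) (ρ : ZMod n) (x₀ w : Vec n)
    (u : List (Vec n)) :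
    sigmaF n ρ ((n - 1) * (u.length + 1)) (x₀ :: (u ++ [w])) =
      ∑ d ∈ range n,
        ((∏ t ∈ range d, w (ρ + (u.length : ℕ) + 2 + (t : ℕ))) *
          ∏ t ∈ range (n - 1 - d), x₀ (ρ + 2 + (d : ℕ) + (t : ℕ))) *
          sigmaF n (ρ + 1 + (d : ℕ)) ((n - 1) * u.length) (x₀ :: u) := by
  have hpred : ((n - 1 : ℕ) : ZMod n) = -1 := by
    simpa using natCast_eq_neg_of_add_eq (n := n) (a := n - 1) (b := 1) (by omega)
  rw [sigmaF_cons_append_singleton]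
  refine sum_congr rfl fun d hd => ?_
  rw [mem_range] at hd
  have hdeg : ∀ t : ℕ, (((n - 1) * (u.length + 1) : ℕ) : ℤ) - t - d =
      ((n - 1 - d + (n - 1) * u.length : ℕ) : ℤ) - t := fun t => by
    rw [mul_add]
    omega
  simp only [hdeg]
  rw [sum_prod_mul_tauF_eq_mul_sigmaF ρ x₀ u (by rw [mul_add]; omega), mul_assoc]
  congr 1
  · refine prod_congr rfl fun t _ => congrArg w ?_
    rw [Nat.cast_mul, hpred]
    push_cast
    ring
  congr 1
  · rw [← prod_range_reflect]
    refine prod_congr rfl fun t ht => congrArg x₀ ?_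
    rw [mem_range] at ht
    rw [natCast_eq_neg_of_add_eq (a := n - 1 - d - 1 - t) (b := 2 + d + t) (by omega)]
    push_cast
    ring
  · congr 1
    rw [natCast_eq_neg_of_add_eq (a := n - 1 - d) (b := 1 + d) (by omega)]
    push_cast
    ring

section Segments

variable (x : ℕ → Vec n)

lemma seg_length (i j : ℕ) : (seg x i j).length = j + 1 - i := by
  simp [seg]

lemma seg_cons {i j : ℕ} (h : i ≤ j) : seg x i j = x i :: seg x (i + 1) j := by
  rw [seg, seg, show j + 1 - i = j + 1 - (i + 1) + 1 by omega, List.range_succ_eq_map,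
    List.map_cons, List.map_map]
  congr 1
  refine List.map_congr_left fun t _ => ?_
  simp only [Function.comp_apply]
  congr 1
  omega

lemma seg_succ_right {i j : ℕ} (h : i ≤ j + 1) : seg x i (j + 1) = seg x i j ++ [x (j + 1)] := by
  rw [seg, seg, show j + 1 + 1 - i = j + 1 - i + 1 by omega, List.range_succ, List.map_append,
    List.map_singleton, show i + (j + 1 - i) = j + 1 by omega]

lemma seg_self (i : ℕ) : seg x i i = [x i] := by
  simp [seg]

lemma sigmaF_seg_pos (hn : 0 < n) (hx : ∀ p s, 0 < x p s) (r : ZMod n) (K : ℕ) {i j : ℕ}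
    (hij : i ≤ j) : 0 < sigmaF n r K (seg x i j) := by
  rw [seg_cons x hij]
  refine sigmaF_pos hn r K (hx i) fun v hv s => ?_
  obtain ⟨t, -, rfl⟩ := List.mem_map.1 hv
  exact hx _ s

end Segments

section Sweep

variable (X : ℕ → Vec n) (i : ℕ)

def carry : ℕ → Vec n
  | 0 => X i
  | q + 1 => etaA n (carry q) (X (i + q + 1))

def sweep (q : ℕ) : ℕ → Vec n := fun p =>
  if p < i ∨ i + q < p then X p
  else if p = i + q then carry X i q
  else etaB n (carry X i (p - i)) (X (p + 1))

lemma applyWord_range'_reverse_eq_sweep (q : ℕ) :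
    applyWord n (List.range' i q).reverse X = sweep X i q := by
  induction q with
  | zero =>
    funext p
    simp only [List.range'_zero, List.reverse_nil, applyWord, List.foldr_nil, sweep]
    split_ifs <;> first | rfl | omega | (subst_vars; rfl)
  | succ q ih =>
    rw [List.range'_concat, List.reverse_append, List.reverse_singleton, one_mul]
    change etaAt n (i + q) (applyWord n (List.range' i q).reverse X) = _
    rw [ih]
    funext p
    simp only [etaAt, sweep]
    split_ifs <;> first | rfl | omega | (subst_vars; simp)

lemma applyWord_range'_reverse_apply {q k : ℕ} (hik : i ≤ k) (hk : k < i + q) :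
    applyWord n (List.range' i q).reverse X k = etaB n (carry X i (k - i)) (X (k + 1)) := by
  rw [applyWord_range'_reverse_eq_sweep, sweep, if_neg (by omega), if_neg (by omega)]

end Sweep

lemma prod_range_div_succ₀ {G : Type*} [CommGroupWithZero G] (f : ℕ → G) (hf : ∀ t, f t ≠ 0)
    (M : ℕ) : ∏ t ∈ range M, f t / f (t + 1) = f 0 / f M :=
  prod_range_induction _ (fun M => f 0 / f M) (div_self (hf 0)) M fun k _ => by
    rw [div_mul_div_comm, mul_comm (f 0), mul_div_mul_left _ _ (hf k)]

lemma kappaF_eq_of_gauge (r : ZMod n) {z y : Vec n} (b : Vec n) (f : ZMod n → ℝ)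
    (hf : ∀ s, f s ≠ 0) (hz : ∀ s, z s = y s * (f (s - 1) / f s)) :
    kappaF n r z b =
      (∑ d ∈ range n, (∏ t ∈ range d, b (r + 1 + (t : ℕ))) *
        (∏ t ∈ range (n - 1 - d), y (r + 1 + (d : ℕ) + (t : ℕ))) * f (r + d)) / f (r - 1) := by
  rw [kappaF, sum_div]
  refine sum_congr rfl fun d hd => ?_
  rw [mem_range] at hd
  have hratio : ∀ t : ℕ, f (r + 1 + (d : ℕ) + (t : ℕ) - 1) / f (r + 1 + (d : ℕ) + (t : ℕ)) =
      f (r + ((d + t : ℕ) : ZMod n)) / f (r + ((d + (t + 1) : ℕ) : ZMod n)) := fun t => by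
    push_cast
    ring_nf
  have hend : r + ((d + (n - 1 - d) : ℕ) : ZMod n) = r - 1 := by
    rw [natCast_eq_neg_of_add_eq (a := d + (n - 1 - d)) (b := 1) (by omega)]
    push_cast
    ring
  simp only [hz, prod_mul_distrib, hratio]
  rw [prod_range_div_succ₀ (fun t => f (r + ((d + t : ℕ) : ZMod n))) (fun t => hf _), hend,
    add_zero]
  ring

section CarryClosedForm

variable {X : ℕ → Vec n} (i : ℕ)

lemma kappaF_carry (q : ℕ)
    (hq : ∀ s, carry X i q s = X i (s - q) *
      (sigmaF n (s - 1 - q) ((n - 1) * q) (seg X i (i + q)) /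
        sigmaF n (s - q) ((n - 1) * q) (seg X i (i + q))))
    (hn : 0 < n) (hX : ∀ p s, 0 < X p s) (r : ZMod n) :
    kappaF n r (carry X i q) (X (i + q + 1)) =
      sigmaF n (r - 1 - q) ((n - 1) * (q + 1)) (seg X i (i + q + 1)) /
        sigmaF n (r - 1 - q) ((n - 1) * q) (seg X i (i + q)) := by
  rw [kappaF_eq_of_gauge r (y := fun s => X i (s - q)) _
    (fun s => sigmaF n (s - q) ((n - 1) * q) (seg X i (i + q)))
    (fun s => (sigmaF_seg_pos X hn hX _ _ (by omega)).ne') hq]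
  congr 1
  have hu : (seg X (i + 1) (i + q)).length = q := by rw [seg_length]; omega
  have happend := sigmaF_cons_append_singleton_eq_sum_sigmaF hn (r - 1 - q) (X i)
    (X (i + q + 1)) (seg X (i + 1) (i + q))
  rw [hu, ← seg_cons X (by omega), ← seg_succ_right X (by omega), ← seg_cons X (by omega)]
    at happend
  have hw : ∀ t : ZMod n, r - 1 - q + q + 2 + t = r + 1 + t := fun t => by ring
  have hx : ∀ d t : ZMod n, r - 1 - q + 2 + d + t = r + 1 + d + t - q := fun d t => by ring
  have hσ : ∀ d : ZMod n, r - 1 - q + 1 + d = r + d - q := fun d => by ring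
  simp only [hw, hx, hσ] at happend
  exact happend.symm

lemma carry_apply (hn : 0 < n) (hX : ∀ p s, 0 < X p s) (q : ℕ) (s : ZMod n) :
    carry X i q s = X i (s - q) *
      (sigmaF n (s - 1 - q) ((n - 1) * q) (seg X i (i + q)) /
        sigmaF n (s - q) ((n - 1) * q) (seg X i (i + q))) := by
  induction q generalizing s with
  | zero => simp [carry, seg_self, sigmaF_zero hn]
  | succ q ih =>
    rw [carry, etaA, ih, kappaF_carry i q ih hn hX, kappaF_carry i q ih hn hX,
      show s - 1 - 1 - q = s - 1 - ((q + 1 : ℕ) : ZMod n) by push_cast; ring,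
      show s - 1 - q = s - ((q + 1 : ℕ) : ZMod n) by push_cast; ring, ← add_assoc]
    have := sigmaF_seg_pos X hn hX (s - ((q + 1 : ℕ) : ZMod n)) ((n - 1) * q) (i.le_add_right q)
    have := sigmaF_seg_pos X hn hX (s - 1 - ((q + 1 : ℕ) : ZMod n)) ((n - 1) * q)
      (i.le_add_right q)
    have := sigmaF_seg_pos X hn hX (s - ((q + 1 : ℕ) : ZMod n)) ((n - 1) * (q + 1))
      (show i ≤ i + q + 1 by omega)
    field_simp

end CarryClosedForm

end

theorem one_shift_formula_general (n : ℕ) (hn : 2 ≤ n) (X : ℕ → Vec n)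
    (hX : ∀ p r, 0 < X p r) (i j k : ℕ)
    (hik : i ≤ k) (hkj : k < j) (r : ZMod n) :
    applyWord n (List.range' i (j - i)).reverse X k r =
      X (k + 1) (r + 1) *
          sigmaF n (r - (k : ℕ) + (i : ℕ)) ((n - 1) * (k + 1 - i)) (seg X i (k + 1)) *
          sigmaF n (r - (k : ℕ) + (i : ℕ) - 1) ((n - 1) * (k - i)) (seg X i k) /
        (sigmaF n (r - (k : ℕ) + (i : ℕ) - 1) ((n - 1) * (k + 1 - i)) (seg X i (k + 1)) *
          sigmaF n (r - (k : ℕ) + (i : ℕ)) ((n - 1) * (k - i)) (seg X i k)) := by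
  have hn₀ : 0 < n := by omega
  obtain ⟨q, rfl⟩ := Nat.exists_eq_add_of_le hik
  have hcarry := carry_apply i hn₀ hX q
  rw [applyWord_range'_reverse_apply X i hik (by omega), etaB, Nat.add_sub_cancel_left,
    kappaF_carry i q hcarry hn₀ hX, kappaF_carry i q hcarry hn₀ hX,
    show i + q + 1 - i = q + 1 by omega, add_sub_cancel_right,
    show r - ((i + q : ℕ) : ZMod n) + i = r - q by push_cast; ring, sub_right_comm r 1]
  have := sigmaF_seg_pos X hn₀ hX (r - q) ((n - 1) * q) (i.le_add_right q)
  have := sigmaF_seg_pos X hn₀ hX (r - q - 1) ((n - 1) * q) (i.le_add_right q)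
  field_simp

/-- for `1 ≤ i < j ≤ m` and `i ≤ k < j`, the action of
`s_{j-1} s_{j-2} ⋯ s_i` on `x_k^{(r)}` is
`x_{k+1}^{(r+1)} σ_{(n-1)(k+1-i)}^{(r-k+i)}(x_i,…,x_{k+1}) σ_{(n-1)(k-i)}^{(r-k+i-1)}(x_i,…,x_k)
/ [σ_{(n-1)(k+1-i)}^{(r-k+i-1)}(x_i,…,x_{k+1}) σ_{(n-1)(k-i)}^{(r-k+i)}(x_i,…,x_k)]`. -/
theorem one_shift_formula (n : ℕ) (hn : 2 ≤ n) (m : ℕ) (X : ℕ → Vec n)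
    (hX : ∀ p r, 0 < X p r) (i j k : ℕ) (hi : 1 ≤ i) (hij : i < j) (hjm : j ≤ m)
    (hik : i ≤ k) (hkj : k < j) (r : ZMod n) :
    applyWord n (List.range' i (j - i)).reverse X k r =
      X (k + 1) (r + 1) *
          sigmaF n (r - (k : ℕ) + (i : ℕ)) ((n - 1) * (k + 1 - i)) (seg X i (k + 1)) *
          sigmaF n (r - (k : ℕ) + (i : ℕ) - 1) ((n - 1) * (k - i)) (seg X i k) /
        (sigmaF n (r - (k : ℕ) + (i : ℕ) - 1) ((n - 1) * (k + 1 - i)) (seg X i (k + 1)) *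
          sigmaF n (r - (k : ℕ) + (i : ℕ)) ((n - 1) * (k - i)) (seg X i k)) :=
  one_shift_formula_general n hn X hX i j k hik hkj r
end

section
/- For n = 2 and m = 3, applying the transposition (1 3) = s_1 s_2 s_1 via the birational R-matrix action to (x_1, x_2, x_3) gives, for the middle vector, s_1 s_2 s_1 (x_2^{(r)}) = x_2^{(r)} · Ω_2^{(r-1)}(x_1,x_2,x_3) Ω_1^{(r)}(x_1,x_2,x_3) / [Ω_1^{(r-1)}(x_1,x_2,x_3) Ω_2^{(r)}(x_1,x_2,x_3)], where indices are mod 2 and Ω_k^{(r)}(x_1,x_2,x_3) = Σ_{ℓ=0}^{1} σ^{(r)}_{(k-1)+ℓ}(x_1,...,x_k) σ̄^{(r+k-1-ℓ)}_{(3-k)-ℓ}(x_{k+1},...,x_3). -/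
/-!
For `n = 2` every `κ` is a sum of two coordinates, so each `η` is an explicit rational map and
`Ω_1`, `Ω_2` are explicit quadratics. The proof tracks the `κ`'s met along `s_1 s_2 s_1`: writing
`(x_1, x_2) ↦ (b', a')` and `(a', x_3) ↦ (c'', ·)` for the first two steps, one has
`a'^{(s)} + x_3^{(s)} = Ω_2^{(s+1)} / (x_1^{(s+1)} + x_2^{(s+1)})` and
`b'^{(s)} + c''^{(s)} = (x_1^{(s)} + x_2^{(s)}) Ω_1^{(s)} / Ω_2^{(s)}`, after which the last step
telescopes to the claimed ratio of `Ω`'s.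
-/

open Finset

theorem kappaF_two (s : ZMod 2) (a b : Vec 2) : kappaF 2 s a b = a (s + 1) + b (s + 1) := by
  simp [kappaF, sum_range_succ]

theorem etaB_two (a b : Vec 2) (s : ZMod 2) :
    etaB 2 a b s = b (s + 1) * (a s + b s) / (a (s + 1) + b (s + 1)) := by
  rw [etaB, kappaF_two, kappaF_two, CharTwo.add_cancel_right]

theorem etaA_two (a b : Vec 2) (s : ZMod 2) :
    etaA 2 a b s = a (s + 1) * (a s + b s) / (a (s + 1) + b (s + 1)) := by
  rw [etaA, kappaF_two, kappaF_two, CharTwo.sub_eq_add, CharTwo.add_cancel_right]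

theorem applyWord_one_two_one_two (n : ℕ) (X : ℕ → Vec n) :
    applyWord n [1, 2, 1] X 2 =
      etaA n (etaB n (X 1) (X 2)) (etaB n (etaA n (X 1) (X 2)) (X 3)) := by
  simp [applyWord, etaAt]

theorem tauF_nil (n : ℕ) (r : ZMod n) (k : ℤ) : tauF n r k [] = if k = 0 then 1 else 0 := by
  unfold tauF
  split_ifs with h0 hk hk
  · subst hk
    simp
  · simpa using (by omega : 0 ≠ k.toNat)
  · omega
  · rfl

theorem tauF_singleton (n : ℕ) (r : ZMod n) (k : ℤ) (y : Vec n) :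
    tauF n r k [y] = if 0 ≤ k ∧ k < n then ∏ β ∈ range k.toNat, y (r - β) else 0 := by
  have hsupport : (Fintype.piFinset fun _ : Fin 1 => range n).filter (fun c => ∑ i, c i = k.toNat)
      = if k.toNat < n then {fun _ => k.toNat} else ∅ := by
    ext c
    split_ifs <;> simp [funext_iff, Fin.forall_fin_one] <;> omega
  unfold tauF
  simp only [List.length_singleton, hsupport]
  split_ifs <;> (try omega) <;> simp

theorem OmegaF_two_one_one_three (r : ZMod 2) (x : ℕ → Vec 2) :
    OmegaF 2 r 1 1 3 x = x 1 r * (x 2 (r + 1) + x 3 (r + 1)) + x 3 (r + 1) * (x 2 r + x 3 r) := by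
  simp [OmegaF, seg, List.range_succ, sigmaF, sigmaBarF, tauF_nil, tauF_singleton,
    sum_range_succ, prod_range_succ, CharTwo.sub_eq_add, CharTwo.add_cancel_right,
    CharTwo.two_eq_zero]
  ring

theorem OmegaF_two_two_one_three (r : ZMod 2) (x : ℕ → Vec 2) :
    OmegaF 2 r 2 1 3 x = x 1 r * (x 1 (r + 1) + x 2 (r + 1)) + x 3 (r + 1) * (x 1 r + x 2 r) := by
  simp [OmegaF, seg, List.range_succ, sigmaF, sigmaBarF, tauF_nil, tauF_singleton,
    sum_range_succ, prod_range_succ, CharTwo.sub_eq_add, CharTwo.add_cancel_right,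
    CharTwo.two_eq_zero]
  ring

theorem OmegaF_two_one_one_three_pos {x : ℕ → Vec 2} (hx : ∀ p s, 0 < x p s) (r : ZMod 2) :
    0 < OmegaF 2 r 1 1 3 x := by
  have := hx 1 r; have := hx 2 r; have := hx 3 r; have := hx 2 (r + 1); have := hx 3 (r + 1)
  rw [OmegaF_two_one_one_three]
  positivity

theorem OmegaF_two_two_one_three_pos {x : ℕ → Vec 2} (hx : ∀ p s, 0 < x p s) (r : ZMod 2) :
    0 < OmegaF 2 r 2 1 3 x := by
  have := hx 1 r; have := hx 2 r; have := hx 1 (r + 1); have := hx 2 (r + 1); have := hx 3 (r + 1)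
  rw [OmegaF_two_two_one_three]
  positivity

theorem etaA_two_add_eq_OmegaF {x : ℕ → Vec 2} (hx : ∀ p s, 0 < x p s) (s : ZMod 2) :
    etaA 2 (x 1) (x 2) s + x 3 s = OmegaF 2 (s + 1) 2 1 3 x / (x 1 (s + 1) + x 2 (s + 1)) := by
  have := hx 1 (s + 1); have := hx 2 (s + 1)
  rw [etaA_two, OmegaF_two_two_one_three, CharTwo.add_cancel_right]
  field_simp

theorem etaB_two_add_etaB_etaA {x : ℕ → Vec 2} (hx : ∀ p s, 0 < x p s) (s : ZMod 2) :
    etaB 2 (x 1) (x 2) s + etaB 2 (etaA 2 (x 1) (x 2)) (x 3) s =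
      (x 1 s + x 2 s) * OmegaF 2 s 1 1 3 x / OmegaF 2 s 2 1 3 x := by
  have := hx 1 s; have := hx 2 s; have := hx 1 (s + 1); have := hx 2 (s + 1)
  have := OmegaF_two_two_one_three_pos hx s; have := OmegaF_two_two_one_three_pos hx (s + 1)
  rw [etaB_two _ (x 3), etaA_two_add_eq_OmegaF hx, etaA_two_add_eq_OmegaF hx,
    CharTwo.add_cancel_right, etaB_two]
  field_simp
  rw [OmegaF_two_one_one_three, OmegaF_two_two_one_three, OmegaF_two_two_one_three,
    CharTwo.add_cancel_right]
  ring

/-- for `n = 2`, `m = 3`, the transposition `(1 3) = s_1 s_2 s_1`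
acts on the middle vector by
`s_1 s_2 s_1(x_2^{(r)}) = x_2^{(r)} Ω_2^{(r-1)} Ω_1^{(r)} / (Ω_1^{(r-1)} Ω_2^{(r)})`. -/
theorem transposition_middle_n2_m3 (X : ℕ → Vec 2) (hX : ∀ p r, 0 < X p r)
    (r : ZMod 2) :
    applyWord 2 [1, 2, 1] X 2 r =
      X 2 r * (OmegaF 2 (r - 1) 2 1 3 X * OmegaF 2 r 1 1 3 X) /
        (OmegaF 2 (r - 1) 1 1 3 X * OmegaF 2 r 2 1 3 X) := by
  have := hX 1 r; have := hX 2 r; have := hX 1 (r + 1); have := hX 2 (r + 1)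
  have := OmegaF_two_one_one_three_pos hX r; have := OmegaF_two_one_one_three_pos hX (r + 1)
  have := OmegaF_two_two_one_three_pos hX r; have := OmegaF_two_two_one_three_pos hX (r + 1)
  rw [applyWord_one_two_one_two, etaA_two, etaB_two_add_etaB_etaA hX,
    etaB_two_add_etaB_etaA hX, etaB_two, CharTwo.add_cancel_right, CharTwo.sub_eq_add]
  field_simp
end
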